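/- Let Σ₂ be the space of all sequences α = α₀α₁α₂⋯ with each αᵢ ∈ {0,1}, equipped with the metric d(α, β) = Σ_{i=0}^∞ |αᵢ − βᵢ|/2^{i+1}, and let σ : Σ₂ → Σ₂ be the shift map σ(α₀α₁α₂⋯) = α₁α₂⋯. Then there exists an uncountable set S ⊆ Σ₂ which is dense in Σ₂, invariant under σ, consists entirely of transitive points of σ, and is a 1-scrambled set of σ: (i) for all α ≠ β in S, limsup_{n→∞} d(σⁿ(α), σⁿ(β)) ≥ 1 and liminf_{n→∞} d(σⁿ(α), σⁿ(β)) = 0, and (ii) for every α in S and every periodic point p of σ, limsup_{n→∞} d(σⁿ(α), σⁿ(p)) ≥ 1/2. -/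

import Mathlib

open Filter

set_option maxHeartbeats 1000000

/-- The distance `d(α, β) = Σ_{i=0}^∞ |αᵢ − βᵢ| / 2^{i+1}` on `Σ₂ = {0,1}^ℕ`. -/
noncomputable def distSigma (α β : ℕ → Fin 2) : ℝ :=
  ∑' i : ℕ, |((α i : ℕ) : ℝ) - ((β i : ℕ) : ℝ)| / 2 ^ (i + 1)

/-- The shift map `σ` on `Σ₂`. -/
def shiftMap (α : ℕ → Fin 2) : ℕ → Fin 2 := fun n => α (n + 1)

/-! ### Construction of the sequences -/

def wordOf (c : ℕ) : List (Fin 2) := (Encodable.decode (α := List (Fin 2)) c).getD []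

lemma wordOf_encode (l : List (Fin 2)) : wordOf (Encodable.encode l) = l := by
  simp [wordOf, Encodable.encodek]

def blen (m : ℕ) : ℕ :=
  if m % 2 = 0 then (wordOf (m / 2)).length + 1 else (Nat.unpair (m / 2)).2 + 1

def bcont (t : ℕ → Fin 2) (m i : ℕ) : Fin 2 :=
  if m % 2 = 0 then (wordOf (m / 2)).getD i 0 else t (Nat.unpair (m / 2)).1

def bstart : ℕ → ℕ
  | 0 => 0
  | m + 1 => bstart m + blen m

lemma blen_pos (m : ℕ) : 0 < blen m := by unfold blen; split <;> omega

lemma le_bstart (m : ℕ) : m ≤ bstart m := by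
  induction m with
  | zero => simp [bstart]
  | succ k ih => have := blen_pos k; simp only [bstart]; omega

lemma bstart_le_bstart {m m' : ℕ} (h : m ≤ m') : bstart m ≤ bstart m' := by
  induction m' with
  | zero => have : m = 0 := by omega
            subst this; exact le_rfl
  | succ k ih =>
    rcases Nat.lt_or_ge m (k + 1) with h' | h'
    · have := ih (by omega); simp only [bstart]; omega
    · have : m = k + 1 := by omega
      subst this; rfl

def blkIdx (n : ℕ) : ℕ := Nat.findGreatest (fun m => bstart m ≤ n) n

def alphaT (t : ℕ → Fin 2) (n : ℕ) : Fin 2 :=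
  bcont t (blkIdx n) (n - bstart (blkIdx n))

lemma alphaT_eq (t : ℕ → Fin 2) (m p : ℕ) (hp : p < blen m) :
    alphaT t (bstart m + p) = bcont t m p := by
  have hidx : blkIdx (bstart m + p) = m := by
    rw [blkIdx, Nat.findGreatest_eq_iff]
    refine ⟨le_trans (le_bstart m) (Nat.le_add_right _ _),
      fun _ => Nat.le_add_right _ _, ?_⟩
    intro n hmn hle hP
    have h1 : bstart (m + 1) ≤ bstart n := bstart_le_bstart hmn
    simp only [bstart] at h1
    omega
  simp [alphaT, hidx]

/-- Any finite word pattern occurs in every `alphaT t`, at a common position `≥ M`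
independent of `t`. -/
lemma exists_word_block (w : ℕ → Fin 2) (N M : ℕ) :
    ∃ P, M ≤ P ∧ ∀ (t : ℕ → Fin 2), ∀ i < N, alphaT t (P + i) = w i := by
  set l : List (Fin 2) := List.ofFn (fun k : Fin (M + N) => w (k - M)) with hl
  set m : ℕ := 2 * Encodable.encode l with hm
  have hm2 : m % 2 = 0 := by omega
  have hmdiv : m / 2 = Encodable.encode l := by omega
  have hword : wordOf (m / 2) = l := by rw [hmdiv]; exact wordOf_encode l
  have hllen : l.length = M + N := by simp [hl]
  have hlen : blen m = M + N + 1 := by simp [blen, hm2, hword, hllen]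
  refine ⟨bstart m + M, Nat.le_add_left _ _, ?_⟩
  intro t i hi
  have h1 : bstart m + M + i = bstart m + (M + i) := by omega
  rw [h1, alphaT_eq t m (M + i) (by omega)]
  have h2 : M + i < l.length := by omega
  have key : bcont t m (M + i) = w i := by
    unfold bcont
    rw [if_pos hm2, hword, List.getD_eq_getElem _ _ h2]
    simp only [hl, List.getElem_ofFn]
    congr 1
    omega
  exact key

/-- For every `j` there are arbitrarily long, arbitrarily late blocks on which
`alphaT t` is constantly `t j`, at a common position independent of `t`. -/
lemma exists_t_block (j L M : ℕ) :
    ∃ P, M ≤ P ∧ ∀ (t : ℕ → Fin 2), ∀ i < L, alphaT t (P + i) = t j := by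
  set m : ℕ := 2 * Nat.pair j (L + M) + 1 with hm
  have hm2 : ¬ (m % 2 = 0) := by omega
  have hmdiv : m / 2 = Nat.pair j (L + M) := by omega
  have hlen : blen m = L + M + 1 := by
    simp [blen, if_neg hm2, hmdiv, Nat.unpair_pair]
  have hMP : M ≤ bstart m := by
    have h1 : L + M ≤ Nat.pair j (L + M) := Nat.right_le_pair _ _
    have h2 := le_bstart m
    omega
  refine ⟨bstart m, hMP, ?_⟩
  intro t i hi
  have h0 : bstart m = bstart m + 0 := rfl
  rw [show bstart m + i = bstart m + (0 + i) by omega, alphaT_eq t m (0 + i) (by omega)]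
  simp [bcont, if_neg hm2, hmdiv, Nat.unpair_pair]

/-! ### Basic facts about `distSigma` -/

lemma term_nonneg (α β : ℕ → Fin 2) (i : ℕ) :
    0 ≤ |((α i : ℕ) : ℝ) - ((β i : ℕ) : ℝ)| / 2 ^ (i + 1) := by positivity

lemma abs_diff_le_one (a b : Fin 2) : |((a : ℕ) : ℝ) - ((b : ℕ) : ℝ)| ≤ 1 := by
  have ha : (a : ℕ) ≤ 1 := by omega
  have hb : (b : ℕ) ≤ 1 := by omega
  have ha' : ((a : ℕ) : ℝ) ≤ 1 := by exact_mod_cast ha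
  have hb' : ((b : ℕ) : ℝ) ≤ 1 := by exact_mod_cast hb
  have ha0 : (0:ℝ) ≤ ((a : ℕ) : ℝ) := Nat.cast_nonneg _
  have hb0 : (0:ℝ) ≤ ((b : ℕ) : ℝ) := Nat.cast_nonneg _
  rw [abs_le]; constructor <;> linarith

lemma abs_diff_eq_one (a b : Fin 2) (h : a ≠ b) : |((a : ℕ) : ℝ) - ((b : ℕ) : ℝ)| = 1 := by
  have hne : (a : ℕ) ≠ (b : ℕ) := fun hh => h (Fin.ext hh)
  have ha : (a : ℕ) < 2 := a.isLt
  have hb : (b : ℕ) < 2 := b.isLt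
  have : (a : ℕ) = 0 ∧ (b : ℕ) = 1 ∨ (a : ℕ) = 1 ∧ (b : ℕ) = 0 := by omega
  rcases this with ⟨h1, h2⟩ | ⟨h1, h2⟩ <;> rw [h1, h2] <;> norm_num

lemma half_fun_eq : (fun i : ℕ => (1:ℝ) / 2 ^ (i + 1)) = fun i : ℕ => (1:ℝ) / 2 / 2 ^ i := by
  funext i; rw [pow_succ]; ring

lemma summable_half : Summable (fun i : ℕ => (1:ℝ) / 2 ^ (i + 1)) := by
  rw [half_fun_eq]; exact summable_geometric_two' 1

lemma tsum_half : ∑' i : ℕ, (1:ℝ) / 2 ^ (i + 1) = 1 := by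
  rw [show ∑' i : ℕ, (1:ℝ) / 2 ^ (i + 1) = ∑' i : ℕ, (1:ℝ) / 2 / 2 ^ i from by
    exact congrArg tsum half_fun_eq]
  exact tsum_geometric_two' 1

lemma term_le (α β : ℕ → Fin 2) (i : ℕ) :
    |((α i : ℕ) : ℝ) - ((β i : ℕ) : ℝ)| / 2 ^ (i + 1) ≤ 1 / 2 ^ (i + 1) := by
  gcongr
  exact abs_diff_le_one _ _

lemma summable_term (α β : ℕ → Fin 2) :
    Summable (fun i => |((α i : ℕ) : ℝ) - ((β i : ℕ) : ℝ)| / 2 ^ (i + 1)) :=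
  Summable.of_nonneg_of_le (term_nonneg α β) (term_le α β) summable_half

lemma distSigma_nonneg (α β : ℕ → Fin 2) : 0 ≤ distSigma α β :=
  tsum_nonneg (term_nonneg α β)

lemma distSigma_le_one (α β : ℕ → Fin 2) : distSigma α β ≤ 1 := by
  rw [distSigma, ← tsum_half]
  exact Summable.tsum_le_tsum (term_le α β) (summable_term α β) summable_half

lemma distSigma_comm (α β : ℕ → Fin 2) : distSigma α β = distSigma β α := by
  unfold distSigma
  congr 1 with i
  rw [abs_sub_comm]

lemma geom_fin (N : ℕ) : ∑ i ∈ Finset.range N, (1:ℝ) / 2 ^ (i + 1) = 1 - 1 / 2 ^ N := by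
  induction N with
  | zero => simp
  | succ k ih =>
    rw [Finset.sum_range_succ, ih, pow_succ]
    field_simp
    ring

lemma distSigma_le_of_agree (α β : ℕ → Fin 2) (N : ℕ) (h : ∀ i < N, α i = β i) :
    distSigma α β ≤ 1 / 2 ^ N := by
  have hs := summable_term α β
  rw [distSigma, ← hs.sum_add_tsum_nat_add N]
  have h1 : ∑ i ∈ Finset.range N, |((α i : ℕ) : ℝ) - ((β i : ℕ) : ℝ)| / 2 ^ (i + 1) = 0 := by
    apply Finset.sum_eq_zero
    intro i hi
    rw [h i (Finset.mem_range.mp hi)]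
    simp
  rw [h1, zero_add]
  have h2 : ∀ i : ℕ, |((α (i + N) : ℕ) : ℝ) - ((β (i + N) : ℕ) : ℝ)| / 2 ^ (i + N + 1)
      ≤ (1 / 2 ^ N) * (1 / 2 ^ (i + 1)) := by
    intro i
    have := abs_diff_le_one (α (i + N)) (β (i + N))
    rw [div_le_iff₀ (by positivity)]
    calc |((α (i + N) : ℕ) : ℝ) - ((β (i + N) : ℕ) : ℝ)| ≤ 1 := this
    _ = (1 / 2 ^ N * (1 / 2 ^ (i + 1))) * 2 ^ (i + N + 1) := by
        rw [pow_add, pow_add]; field_simp; ring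
  have hb : ∑' i : ℕ, ((1:ℝ) / 2 ^ N) * (1 / 2 ^ (i + 1)) = 1 / 2 ^ N := by
    rw [tsum_mul_left, tsum_half, mul_one]
  rw [← hb]
  exact Summable.tsum_le_tsum h2 ((summable_nat_add_iff N).mpr hs) (summable_half.mul_left _)

lemma distSigma_ge_of_diff (α β : ℕ → Fin 2) (N : ℕ) (h : ∀ i < N, α i ≠ β i) :
    1 - 1 / 2 ^ N ≤ distSigma α β := by
  have hs := summable_term α β
  rw [distSigma, ← hs.sum_add_tsum_nat_add N]
  have h1 : ∑ i ∈ Finset.range N, |((α i : ℕ) : ℝ) - ((β i : ℕ) : ℝ)| / 2 ^ (i + 1)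
      = 1 - 1 / 2 ^ N := by
    rw [← geom_fin N]
    apply Finset.sum_congr rfl
    intro i hi
    rw [abs_diff_eq_one _ _ (h i (Finset.mem_range.mp hi))]
  rw [h1]
  have : 0 ≤ ∑' i : ℕ, |((α (i + N) : ℕ) : ℝ) - ((β (i + N) : ℕ) : ℝ)| / 2 ^ (i + N + 1) :=
    tsum_nonneg (fun i => term_nonneg α β (i + N))
  linarith

lemma distSigma_ge_half (α β : ℕ → Fin 2) (h : α 0 ≠ β 0) : 1 / 2 ≤ distSigma α β := by
  have hs := summable_term α β
  have := Summable.le_tsum hs 0 (fun i _ => term_nonneg α β i)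
  rw [abs_diff_eq_one _ _ h] at this
  norm_num at this
  exact this


/-! ### Shift iteration -/

lemma shift_iter (γ : ℕ → Fin 2) (n : ℕ) : shiftMap^[n] γ = fun i => γ (n + i) := by
  induction n with
  | zero => funext i; simp
  | succ k ih =>
    funext i
    rw [Function.iterate_succ_apply', ih]
    show γ (k + (i + 1)) = γ (k + 1 + i)
    congr 1
    omega

lemma dist_shift (A B : ℕ → Fin 2) (n : ℕ) :
    distSigma (shiftMap^[n] A) (shiftMap^[n] B)
      = distSigma (fun i => A (n + i)) (fun i => B (n + i)) := by
  rw [shift_iter, shift_iter]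

/-! ### limsup / liminf helpers -/

lemma limsup_ge_of_freq_diff {A B : ℕ → Fin 2}
    (h : ∀ N M : ℕ, ∃ n, M ≤ n ∧ ∀ i < N, A (n + i) ≠ B (n + i)) :
    (1:ℝ) ≤ limsup (fun n => distSigma (shiftMap^[n] A) (shiftMap^[n] B)) atTop := by
  set f : ℕ → ℝ := fun n => distSigma (shiftMap^[n] A) (shiftMap^[n] B) with hf
  have hb : IsBoundedUnder (· ≤ ·) atTop f :=
    isBoundedUnder_of ⟨1, fun n => distSigma_le_one _ _⟩
  by_contra hlt
  push_neg at hlt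
  obtain ⟨N, hN⟩ := exists_pow_lt_of_lt_one (by linarith : (0:ℝ) < 1 - limsup f atTop)
    (by norm_num : (1:ℝ)/2 < 1)
  have hpow : ((1:ℝ)/2) ^ N = 1 / 2 ^ N := by rw [div_pow, one_pow]
  have hfreq : ∃ᶠ n in atTop, 1 - (1:ℝ)/2 ^ N ≤ f n := by
    rw [frequently_atTop]
    intro M
    obtain ⟨n, hn, hd⟩ := h N M
    refine ⟨n, hn, ?_⟩
    show 1 - (1:ℝ)/2 ^ N ≤ distSigma (shiftMap^[n] A) (shiftMap^[n] B)
    rw [dist_shift]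
    exact distSigma_ge_of_diff _ _ N (fun i hi => hd i hi)
  have hle := le_limsup_of_frequently_le hfreq hb
  rw [hpow] at hN
  linarith

lemma liminf_eq_zero_of_freq_agree {A B : ℕ → Fin 2}
    (h : ∀ N M : ℕ, ∃ n, M ≤ n ∧ ∀ i < N, A (n + i) = B (n + i)) :
    liminf (fun n => distSigma (shiftMap^[n] A) (shiftMap^[n] B)) atTop = 0 := by
  set f : ℕ → ℝ := fun n => distSigma (shiftMap^[n] A) (shiftMap^[n] B) with hf
  have hb0 : IsBoundedUnder (· ≥ ·) atTop f :=
    isBoundedUnder_of ⟨0, fun n => distSigma_nonneg _ _⟩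
  have hcob : IsCoboundedUnder (· ≥ ·) atTop f :=
    isCoboundedUnder_ge_of_le atTop (fun n => distSigma_le_one _ _)
  apply le_antisymm
  · by_contra hgt
    push_neg at hgt
    obtain ⟨N, hN⟩ := exists_pow_lt_of_lt_one hgt (by norm_num : (1:ℝ)/2 < 1)
    have hpow : ((1:ℝ)/2) ^ N = 1 / 2 ^ N := by rw [div_pow, one_pow]
    have hfreq : ∃ᶠ n in atTop, f n ≤ (1:ℝ)/2 ^ N := by
      rw [frequently_atTop]
      intro M
      obtain ⟨n, hn, hd⟩ := h N M
      refine ⟨n, hn, ?_⟩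
      show distSigma (shiftMap^[n] A) (shiftMap^[n] B) ≤ (1:ℝ)/2 ^ N
      rw [dist_shift]
      exact distSigma_le_of_agree _ _ N (fun i hi => hd i hi)
    have hle := liminf_le_of_frequently_le hfreq hb0
    rw [hpow] at hN
    linarith
  · exact le_liminf_of_le hcob (Eventually.of_forall (fun n => distSigma_nonneg _ _))

lemma limsup_ge_half_of_freq {A B : ℕ → Fin 2}
    (h : ∀ M : ℕ, ∃ n, M ≤ n ∧ A n ≠ B n) :
    (1:ℝ)/2 ≤ limsup (fun n => distSigma (shiftMap^[n] A) (shiftMap^[n] B)) atTop := by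
  refine le_limsup_of_frequently_le ?_
    (isBoundedUnder_of ⟨1, fun n => distSigma_le_one _ _⟩)
  rw [frequently_atTop]
  intro M
  obtain ⟨n, hn, hne⟩ := h M
  refine ⟨n, hn, ?_⟩
  show (1:ℝ)/2 ≤ distSigma (shiftMap^[n] A) (shiftMap^[n] B)
  rw [dist_shift]
  exact distSigma_ge_half _ _ (by simpa using hne)

/-! ### Frequency lemmas for the constructed family -/

lemma freq_agree (t s : ℕ → Fin 2) (a b : ℕ) (hab : a ≤ b) :
    ∀ N M : ℕ, ∃ n, M ≤ n ∧ ∀ i < N,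
      (shiftMap^[a] (alphaT t)) (n + i) = (shiftMap^[b] (alphaT s)) (n + i) := by
  intro N M
  obtain ⟨P, hP, hblock⟩ := exists_word_block (fun _ => 0) (N + (b - a)) (a + M)
  refine ⟨P - a, by omega, ?_⟩
  intro i hi
  rw [shift_iter, shift_iter]
  show alphaT t (a + (P - a + i)) = alphaT s (b + (P - a + i))
  rw [show a + (P - a + i) = P + i by omega,
      show b + (P - a + i) = P + ((b - a) + i) by omega,
      hblock t i (by omega), hblock s ((b - a) + i) (by omega)]

lemma freq_diff (t s : ℕ → Fin 2) (j : ℕ) (hj : t j ≠ s j) (a b : ℕ) (hab : a ≤ b) :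
    ∀ N M : ℕ, ∃ n, M ≤ n ∧ ∀ i < N,
      (shiftMap^[a] (alphaT t)) (n + i) ≠ (shiftMap^[b] (alphaT s)) (n + i) := by
  intro N M
  obtain ⟨P, hP, hblock⟩ := exists_t_block j (N + (b - a)) (a + M)
  refine ⟨P - a, by omega, ?_⟩
  intro i hi
  rw [shift_iter, shift_iter]
  show alphaT t (a + (P - a + i)) ≠ alphaT s (b + (P - a + i))
  rw [show a + (P - a + i) = P + i by omega,
      show b + (P - a + i) = P + ((b - a) + i) by omega,
      hblock t i (by omega), hblock s ((b - a) + i) (by omega)]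
  exact hj

lemma freq_diff_shift (t : ℕ → Fin 2) (a b : ℕ) (hab : a < b) :
    ∀ N M : ℕ, ∃ n, M ≤ n ∧ ∀ i < N,
      (shiftMap^[a] (alphaT t)) (n + i) ≠ (shiftMap^[b] (alphaT t)) (n + i) := by
  intro N M
  set d := b - a with hd
  have hd0 : 0 < d := by omega
  set w : ℕ → Fin 2 := fun i => if (i / d) % 2 = 0 then 0 else 1 with hw
  obtain ⟨P, hP, hblock⟩ := exists_word_block w (N + d) (a + M)
  refine ⟨P - a, by omega, ?_⟩
  intro i hi
  rw [shift_iter, shift_iter]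
  show alphaT t (a + (P - a + i)) ≠ alphaT t (b + (P - a + i))
  rw [show a + (P - a + i) = P + i by omega,
      show b + (P - a + i) = P + (d + i) by omega,
      hblock t i (by omega), hblock t (d + i) (by omega)]
  have hdiv : (d + i) / d = i / d + 1 := by
    rw [show d + i = i + d by omega, Nat.add_div_right _ hd0]
  rw [hw]
  simp only
  rw [hdiv]
  by_cases hpar : (i / d) % 2 = 0
  · rw [if_pos hpar, if_neg (by omega)]
    decide
  · rw [if_neg hpar, if_pos (by omega)]
    decide

/-! ### Auxiliary arithmetic -/

lemma ex_mult (per D : ℕ) (h : 0 < per) : ∃ q, D ≤ q * per ∧ q * per < D + per := by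
  induction D with
  | zero => exact ⟨0, by omega, by omega⟩
  | succ k ih =>
    obtain ⟨q, h1, h2⟩ := ih
    rcases Nat.lt_or_ge (q * per) (k + 1) with h3 | h3
    · refine ⟨q + 1, ?_, ?_⟩ <;>
      · have hx : (q + 1) * per = q * per + per := by ring
        omega
    · exact ⟨q, h3, by omega⟩

lemma periodic_ext {p : ℕ → Fin 2} {per : ℕ} (hp : ∀ i, p (per + i) = p i) :
    ∀ q i, p (i + q * per) = p i := by
  intro q
  induction q with
  | zero => intro i; simp
  | succ k ih =>
    intro i
    rw [show i + (k + 1) * per = per + (i + k * per) by ring, hp, ih]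

/-- Theorem 6 of the paper. The shift map on `Σ₂` has a dense
uncountable invariant `1`-scrambled set consisting of transitive points. -/
theorem shift_has_dense_invariant_one_scrambled_set :
    ∃ S : Set (ℕ → Fin 2), ¬ S.Countable ∧
      (∀ β : ℕ → Fin 2, ∀ ε > (0:ℝ), ∃ α ∈ S, distSigma α β < ε) ∧
      (∀ α ∈ S, shiftMap α ∈ S) ∧
      (∀ α ∈ S, ∀ β : ℕ → Fin 2, ∀ ε > (0:ℝ), ∃ n : ℕ,
        distSigma (shiftMap^[n] α) β < ε) ∧
      (∀ α ∈ S, ∀ β ∈ S, α ≠ β →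
        (1 : ℝ) ≤ Filter.limsup
            (fun n : ℕ => distSigma (shiftMap^[n] α) (shiftMap^[n] β)) Filter.atTop ∧
        Filter.liminf
            (fun n : ℕ => distSigma (shiftMap^[n] α) (shiftMap^[n] β)) Filter.atTop = 0) ∧
      (∀ α ∈ S, ∀ p : ℕ → Fin 2, (∃ m : ℕ, 0 < m ∧ shiftMap^[m] p = p) →
        (1 : ℝ) / 2 ≤ Filter.limsup
            (fun n : ℕ => distSigma (shiftMap^[n] α) (shiftMap^[n] p)) Filter.atTop) := by
  classical
  set S : Set (ℕ → Fin 2) := {x | ∃ t : ℕ → Fin 2, ∃ a : ℕ, x = shiftMap^[a] (alphaT t)}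
    with hSdef
  have hmem : ∀ t a, shiftMap^[a] (alphaT t) ∈ S := fun t a => ⟨t, a, rfl⟩
  have hmem0 : ∀ t, alphaT t ∈ S := fun t => ⟨t, 0, rfl⟩
  have hcommLim : ∀ A B : ℕ → Fin 2,
      limsup (fun n => distSigma (shiftMap^[n] A) (shiftMap^[n] B)) atTop
        = limsup (fun n => distSigma (shiftMap^[n] B) (shiftMap^[n] A)) atTop := by
    intro A B
    congr 1
    funext n
    rw [distSigma_comm]
  have hcommInf : ∀ A B : ℕ → Fin 2,
      liminf (fun n => distSigma (shiftMap^[n] A) (shiftMap^[n] B)) atTop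
        = liminf (fun n => distSigma (shiftMap^[n] B) (shiftMap^[n] A)) atTop := by
    intro A B
    congr 1
    funext n
    rw [distSigma_comm]
  have htrans : ∀ α ∈ S, ∀ β : ℕ → Fin 2, ∀ ε > (0:ℝ), ∃ n : ℕ,
      distSigma (shiftMap^[n] α) β < ε := by
    rintro α ⟨t, a, rfl⟩ β ε hε
    obtain ⟨N, hN⟩ := exists_pow_lt_of_lt_one hε (by norm_num : (1:ℝ)/2 < 1)
    have hpow : ((1:ℝ)/2) ^ N = 1 / 2 ^ N := by rw [div_pow, one_pow]
    obtain ⟨P, hP, hblock⟩ := exists_word_block β N a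
    refine ⟨P - a, ?_⟩
    have he : shiftMap^[P - a] (shiftMap^[a] (alphaT t)) = fun i => alphaT t (P + i) := by
      simp only [shift_iter]
      funext i
      congr 1
      omega
    rw [he]
    have hle := distSigma_le_of_agree (fun i => alphaT t (P + i)) β N
      (fun i hi => hblock t i hi)
    rw [hpow] at hN
    linarith
  refine ⟨S, ?_, ?_, ?_, htrans, ?_, ?_⟩
  · -- not countable
    intro hc
    have hsub : Countable S := hc.to_subtype
    have hinj : Function.Injective alphaT := by
      intro t s hts
      funext j
      by_contra hj
      obtain ⟨P, _, hP⟩ := exists_t_block j 1 0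
      have h1 := hP t 0 (by omega)
      have h2 := hP s 0 (by omega)
      rw [hts] at h1
      exact hj (h1.symm.trans h2)
    have hinj2 : Function.Injective (fun t : ℕ → Fin 2 => (⟨alphaT t, hmem0 t⟩ : S)) := by
      intro t s h
      exact hinj (congrArg Subtype.val h)
    have hcnt : Countable (ℕ → Fin 2) := hinj2.countable
    obtain ⟨g, hg⟩ := exists_surjective_nat (ℕ → Fin 2)
    obtain ⟨k, hk⟩ := hg (fun n => if g n n = 0 then 1 else 0)
    have hck := congrFun hk k
    by_cases h0 : g k k = 0
    · rw [if_pos h0] at hck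
      rw [h0] at hck
      exact absurd hck (by decide)
    · rw [if_neg h0] at hck
      exact h0 hck
  · -- dense
    intro β ε hε
    obtain ⟨n, hn⟩ := htrans (alphaT (fun _ => 0)) (hmem0 _) β ε hε
    exact ⟨shiftMap^[n] (alphaT (fun _ => 0)), hmem _ n, hn⟩
  · -- invariant
    rintro α ⟨t, a, rfl⟩
    exact ⟨t, a + 1, (Function.iterate_succ_apply' shiftMap a (alphaT t)).symm⟩
  · -- scrambled
    rintro α ⟨t, a, rfl⟩ β ⟨s, b, rfl⟩ hne
    constructor
    · by_cases hts : ∃ j, t j ≠ s j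
      · obtain ⟨j, hj⟩ := hts
        rcases le_or_gt a b with hab | hab
        · exact limsup_ge_of_freq_diff (freq_diff t s j hj a b hab)
        · rw [hcommLim]
          exact limsup_ge_of_freq_diff (freq_diff s t j (Ne.symm hj) b a (le_of_lt hab))
      · push_neg at hts
        have hts' : t = s := funext hts
        subst hts'
        have hab : a ≠ b := fun h => hne (by rw [h])
        rcases Nat.lt_or_ge a b with h1 | h1
        · exact limsup_ge_of_freq_diff (freq_diff_shift t a b h1)
        · have h2 : b < a := by omega
          rw [hcommLim]
          exact limsup_ge_of_freq_diff (freq_diff_shift t b a h2)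
    · rcases le_or_gt a b with hab | hab
      · exact liminf_eq_zero_of_freq_agree (freq_agree t s a b hab)
      · rw [hcommInf]
        exact liminf_eq_zero_of_freq_agree (freq_agree s t b a (le_of_lt hab))
  · -- periodic points
    rintro α ⟨t, a, rfl⟩ p ⟨per, hper0, hpfix⟩
    have hp1 : ∀ i, p (per + i) = p i := by
      intro i
      have h := congrFun hpfix i
      rw [shift_iter] at h
      simpa using h
    apply limsup_ge_half_of_freq
    intro M
    by_cases hz : ∀ i, p i = 0
    · obtain ⟨P, hP, hblock⟩ := exists_word_block (fun _ => 1) 1 (a + M)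
      refine ⟨P - a, by omega, ?_⟩
      rw [shift_iter]
      show alphaT t (a + (P - a)) ≠ p (P - a)
      rw [show a + (P - a) = P + 0 by omega, hblock t 0 (by omega), hz (P - a)]
      decide
    · push_neg at hz
      obtain ⟨i₀, hi₀⟩ := hz
      have hi1 : p i₀ = 1 := by
        have hlt := (p i₀).isLt
        have hv : (p i₀ : ℕ) ≠ 0 := fun hh => hi₀ (Fin.ext hh)
        apply Fin.ext
        show (p i₀ : ℕ) = (1 : Fin 2).val
        simp only [Fin.val_one]
        omega
      obtain ⟨P, hP, hblock⟩ := exists_word_block (fun _ => 0) per (a + i₀ + per + M)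
      obtain ⟨q, hq1, hq2⟩ := ex_mult per (P - (a + i₀)) hper0
      set Q := q * per with hQ
      refine ⟨i₀ + Q, by omega, ?_⟩
      rw [shift_iter]
      show alphaT t (a + (i₀ + Q)) ≠ p (i₀ + Q)
      have hpn : p (i₀ + Q) = 1 := by rw [hQ, periodic_ext hp1 q i₀, hi1]
      rw [show a + (i₀ + Q) = P + (a + (i₀ + Q) - P) by omega,
          hblock t _ (by omega), hpn]
      decide
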